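/- Let (V, μ, α) be a multiplicative Hom-Jordan algebra over a field F with α surjective, and let Z(V) be its centralizer. If D₁ lies in the α^k-centroid C_{α^k}(V) and D₂ lies in the α^s-quasicentroid QC_{α^s}(V) (k, s ≥ 0), then the commutator [D₁, D₂] = D₁ ∘ D₂ − D₂ ∘ D₁ maps V into Z(V). Moreover, if Z(V) = {0} then [D₁, D₂] = 0. -/
import Mathlib


/-- `D` lies in the `α^k`-centroid of the Hom-Jordan algebra `(V, μ, α)`. -/
def InCentroid {F V : Type*} [Field F] [AddCommGroup V] [Module F V]
    (μ : V →ₗ[F] V →ₗ[F] V) (α : V →ₗ[F] V) (k : ℕ) (D : V →ₗ[F] V) : Prop :=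
  D ∘ₗ α = α ∘ₗ D ∧ ∀ x y : V,
    μ (D x) ((α ^ k) y) = D (μ x y) ∧ μ ((α ^ k) x) (D y) = D (μ x y)

/-- `D` lies in the `α^k`-quasicentroid of the Hom-Jordan algebra `(V, μ, α)`. -/
def InQCentroid {F V : Type*} [Field F] [AddCommGroup V] [Module F V]
    (μ : V →ₗ[F] V →ₗ[F] V) (α : V →ₗ[F] V) (k : ℕ) (D : V →ₗ[F] V) : Prop :=
  D ∘ₗ α = α ∘ₗ D ∧ ∀ x y : V, μ (D x) ((α ^ k) y) = μ ((α ^ k) x) (D y)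

theorem stmt12 {F V : Type*} [Field F] [AddCommGroup V] [Module F V]
    (μ : V →ₗ[F] V →ₗ[F] V) (α : V →ₗ[F] V)
    (hcomm : ∀ x y : V, μ x y = μ y x)
    (hJ : ∀ x y : V, μ (α (α x)) (μ y (μ x x)) = μ (μ (α x) y) (α (μ x x)))
    (hmult : ∀ x y : V, α (μ x y) = μ (α x) (α y))
    (hsurj : Function.Surjective α)
    (k s : ℕ) (D₁ D₂ : V →ₗ[F] V)
    (h₁ : InCentroid μ α k D₁) (h₂ : InQCentroid μ α s D₂) :
    (∀ x : V, (D₁ ∘ₗ D₂ - D₂ ∘ₗ D₁) x ∈ {z : V | ∀ y : V, μ z y = 0}) ∧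
    ({z : V | ∀ y : V, μ z y = 0} = {0} → D₁ ∘ₗ D₂ - D₂ ∘ₗ D₁ = 0) := by

  obtain ⟨h1c, h1⟩ := h₁
  obtain ⟨h2c, h2⟩ := h₂
  have c1 : ∀ (n : ℕ) (x : V), D₁ ((α ^ n) x) = (α ^ n) (D₁ x) := by
    intro n
    induction n with
    | zero => intro x; simp
    | succ n ih =>
      intro x
      have hc := LinearMap.ext_iff.mp h1c
      simp only [pow_succ, Module.End.mul_apply] at *
      rw [ih (α x)]; congr 1; simpa using hc x
  have c2 : ∀ (n : ℕ) (x : V), D₂ ((α ^ n) x) = (α ^ n) (D₂ x) := by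
    intro n
    induction n with
    | zero => intro x; simp
    | succ n ih =>
      intro x
      have hc := LinearMap.ext_iff.mp h2c
      simp only [pow_succ, Module.End.mul_apply] at *
      rw [ih (α x)]; congr 1; simpa using hc x
  have hsurjn : ∀ n : ℕ, Function.Surjective ((α ^ n : V →ₗ[F] V)) := by
    intro n
    induction n with
    | zero => intro x; exact ⟨x, rfl⟩
    | succ n ih =>
      intro x
      obtain ⟨y, hy⟩ := ih x
      obtain ⟨z, hz⟩ := hsurj y
      exact ⟨z, by simp [pow_succ, Module.End.mul_apply, hz, hy]⟩
  have key : ∀ x y : V, μ ((D₁ ∘ₗ D₂ - D₂ ∘ₗ D₁) x) y = 0 := by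
    intro x y
    obtain ⟨y', rfl⟩ := hsurjn (k + s) y
    have e1 : μ (D₁ (D₂ x)) ((α ^ (k + s)) y') = D₁ (μ ((α ^ s) x) (D₂ y')) := by
      have : (α ^ (k + s)) y' = (α ^ k) ((α ^ s) y') := by
        rw [pow_add]; rfl
      rw [this, (h1 (D₂ x) ((α ^ s) y')).1, h2 x y']
    have e2 : μ (D₂ (D₁ x)) ((α ^ (k + s)) y') = D₁ (μ ((α ^ s) x) (D₂ y')) := by
      have : (α ^ (k + s)) y' = (α ^ s) ((α ^ k) y') := by
        rw [add_comm, pow_add]; rfl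
      rw [this, h2 (D₁ x) ((α ^ k) y'), ← c1 s x, c2 k y',
        (h1 ((α ^ s) x) (D₂ y')).1]
    simp only [LinearMap.sub_apply, LinearMap.comp_apply, map_sub,
      LinearMap.sub_apply, e1, e2, sub_self]
  constructor
  · intro x
    exact fun y => key x y
  · intro hz
    ext x
    have : (D₁ ∘ₗ D₂ - D₂ ∘ₗ D₁) x ∈ ({0} : Set V) := hz ▸ (fun y => key x y)
    simpa using this
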